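/- arXiv:1609.08054 — 9 statements merged into one kernel-verified Lean document; each statement's English description precedes it below -/
import Mathlib

section
/- If N₁ and N₂ are second submodules of an R-module M, then N₁ + N₂ is a 2-absorbing second submodule of M. -/
open Pointwise

/-- A proper submodule `L` is completely irreducible if whenever `L` is the
intersection of a family of submodules, it equals one of them. -/
def IsCompletelyIrreducible {R M : Type*} [CommRing R] [AddCommGroup M] [Module R M]
    (L : Submodule R M) : Prop :=
  L ≠ ⊤ ∧ ∀ S : Set (Submodule R M), L = sInf S → L ∈ S

/-- A nonzero submodule `N` is 2-absorbing second if whenever `a b : R`, `L` is a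
completely irreducible submodule, and `a • b • N ⊆ L`, then `a • N ⊆ L` or
`b • N ⊆ L` or `a * b ∈ Ann(N)`. -/
def Is2AbsorbingSecond {R M : Type*} [CommRing R] [AddCommGroup M] [Module R M]
    (N : Submodule R M) : Prop :=
  N ≠ ⊥ ∧ ∀ (a b : R) (L : Submodule R M), IsCompletelyIrreducible L →
    a • b • N ≤ L → a • N ≤ L ∨ b • N ≤ L ∨ a * b ∈ N.annihilator

/-- A nonzero submodule `S` is second if for each `a : R`, multiplication by `a`
on `S` is surjective (`a • S = S`) or zero (`a • S = ⊥`). -/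
def IsSecondSubmodule {R M : Type*} [CommRing R] [AddCommGroup M] [Module R M]
    (S : Submodule R M) : Prop :=
  S ≠ ⊥ ∧ ∀ a : R, a • S = S ∨ a • S = ⊥

/-!
If `S` is second and `a • b • S ≤ L`, then at least two of `a • S ≤ L`, `b • S ≤ L` and
`a * b ∈ Ann(S)` hold: either `a` and `b` both act surjectively on `S`, so `S ≤ L`, or one of
them kills `S`. Two of three conditions for `N₁` and two of three for `N₂` share one, and each
condition passes to `N₁ ⊔ N₂`.
-/

theorem Submodule.pointwise_smul_eq_bot_iff_mem_annihilator {R M : Type*} [CommSemiring R]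
    [AddCommMonoid M] [Module R M] (a : R) (N : Submodule R M) :
    a • N = ⊥ ↔ a ∈ N.annihilator := by
  rw [eq_bot_iff, Submodule.mem_annihilator]
  constructor
  · exact fun h n hn ↦ (Submodule.mem_bot R).1 (h (Submodule.smul_mem_pointwise_smul n a N hn))
  · rintro h _ ⟨n, hn, rfl⟩
    exact (Submodule.mem_bot R).2 (h n hn)

namespace IsSecondSubmodule

variable {R M : Type*} [CommRing R] [AddCommGroup M] [Module R M] {S : Submodule R M}

theorem two_of_three (hS : IsSecondSubmodule S) {a b : R} {L : Submodule R M}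
    (hab : a • b • S ≤ L) :
    (a • S ≤ L ∧ b • S ≤ L) ∨ (a • S ≤ L ∧ a * b ∈ S.annihilator) ∨
      (b • S ≤ L ∧ a * b ∈ S.annihilator) := by
  rcases hS.2 b with hb | hb
  · rw [hb] at hab
    rcases hS.2 a with ha | ha
    · rw [ha] at hab
      exact Or.inl ⟨(Submodule.smul_le_self_of_tower a S).trans hab, hb.le.trans hab⟩
    · refine Or.inr (Or.inl ⟨hab, ?_⟩)
      exact Ideal.mul_mem_right b _
        ((Submodule.pointwise_smul_eq_bot_iff_mem_annihilator a S).1 ha)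
  · refine Or.inr (Or.inr ⟨hb ▸ bot_le, ?_⟩)
    exact Ideal.mul_mem_left _ a ((Submodule.pointwise_smul_eq_bot_iff_mem_annihilator b S).1 hb)

end IsSecondSubmodule

theorem sum_of_two_second_is_2absorbing_second
    {R M : Type*} [CommRing R] [AddCommGroup M] [Module R M]
    (N₁ N₂ : Submodule R M) (h₁ : IsSecondSubmodule N₁) (h₂ : IsSecondSubmodule N₂) :
    Is2AbsorbingSecond (N₁ ⊔ N₂) := by
  refine ⟨ne_bot_of_le_ne_bot h₁.1 le_sup_left, fun a b L _ hab ↦ ?_⟩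
  simp only [Submodule.smul_sup', sup_le_iff] at hab
  have h₁' := h₁.two_of_three hab.1
  have h₂' := h₂.two_of_three hab.2
  simp only [Submodule.smul_sup', sup_le_iff, Submodule.annihilator_sup, Ideal.mem_inf]
  tauto
end

section
/- If N is a secondary submodule of M (i.e., for each a ∈ R, multiplication by a on N is surjective or nilpotent) and the quotient ring R/Ann_R(N) has no nonzero nilpotent elements, then N is a 2-absorbing second submodule of M. -/
/-! Reducedness of `R ⧸ Ann(N)` turns the nilpotent alternative of a secondary submodule into
annihilation, so every scalar acts on `N` either surjectively or as zero. If `a` or `b` kills `N`,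
so does `a * b`; otherwise `a • b • N = N = a • N`. -/

open Pointwise

/-- A nonzero submodule `N` is secondary if for each `a : R`, multiplication by `a`
on `N` is surjective or nilpotent. -/
def IsSecondarySubmodule {R M : Type*} [CommRing R] [AddCommGroup M] [Module R M]
    (N : Submodule R M) : Prop :=
  N ≠ ⊥ ∧ ∀ a : R, a • N = N ∨ ∃ n : ℕ, a ^ n ∈ N.annihilator

section

variable {R M : Type*} [CommRing R] [AddCommGroup M] [Module R M] {N : Submodule R M}

theorem IsSecondarySubmodule.smul_eq_or_mem_annihilator (h : IsSecondarySubmodule N)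
    (hred : ∀ r : R, ∀ n : ℕ, r ^ n ∈ N.annihilator → r ∈ N.annihilator) (c : R) :
    c • N = N ∨ c ∈ N.annihilator :=
  (h.2 c).imp_right fun ⟨n, hn⟩ => hred c n hn

theorem Is2AbsorbingSecond.of_forall_smul_eq_or_mem_annihilator (hN : N ≠ ⊥)
    (hdich : ∀ c : R, c • N = N ∨ c ∈ N.annihilator) : Is2AbsorbingSecond N := by
  refine ⟨hN, fun a b L _ hab => ?_⟩
  rcases hdich a with ha | ha
  · rcases hdich b with hb | hb
    · rw [hb, ha] at hab
      exact Or.inl (by rwa [ha])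
    · exact Or.inr (Or.inr (Ideal.mul_mem_left _ a hb))
  · exact Or.inr (Or.inr (Ideal.mul_mem_right _ _ ha))

end

theorem secondary_reduced_is_2absorbing_second
    {R M : Type*} [CommRing R] [AddCommGroup M] [Module R M]
    (N : Submodule R M) (h : IsSecondarySubmodule N)
    (hred : ∀ r : R, ∀ n : ℕ, r ^ n ∈ N.annihilator → r ∈ N.annihilator) :
    Is2AbsorbingSecond N :=
  .of_forall_smul_eq_or_mem_annihilator h.1 (h.smul_eq_or_mem_annihilator hred)
end

section
/- Let N be a 2-absorbing second submodule of M, I an ideal of R, a ∈ R, and L a completely irreducible submodule of M. If I•a•N ⊆ L, then a•N ⊆ L or I•N ⊆ L or I•a ⊆ Ann_R(N). -/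
open Pointwise

/-! Suppose `a • N ⊄ L`. Each `b ∈ I` satisfies `b • a • N ≤ L`, so the 2-absorbing property
puts `b` in the ideal `L : N` or in the ideal `Ann(N) : a`. An additive group is never the union
of two proper subgroups, hence `I` is contained in one of these two ideals. -/

namespace Submodule

variable {R M : Type*} [CommSemiring R] [AddCommMonoid M] [Module R M]

theorem ideal_smul_le_iff_le_colon {I : Ideal R} {N L : Submodule R M} :
    I • N ≤ L ↔ I ≤ L.colon N := by
  rw [smul_le, SetLike.le_def]
  simp only [mem_colon, SetLike.mem_coe]

theorem pointwise_smul_le_ideal_smul {I : Ideal R} {b : R} (hb : b ∈ I) (N : Submodule R M) :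
    b • N ≤ I • N :=
  ideal_span_singleton_smul b N ▸ smul_mono_left (Ideal.span_singleton_le_iff_mem I |>.2 hb)

end Submodule

open Submodule

theorem Is2AbsorbingSecond.le_colon_or_le_colon_of_ideal_smul_le
    {R M : Type*} [CommRing R] [AddCommGroup M] [Module R M] {N L : Submodule R M}
    (hN : Is2AbsorbingSecond N) (hL : IsCompletelyIrreducible L) {I : Ideal R} {a : R}
    (haN : ¬a • N ≤ L) (h : I • a • N ≤ L) :
    I ≤ L.colon N ∨ I ≤ N.annihilator.colon {a} := by
  refine AddSubgroupClass.subset_union.1 fun b hb ↦ ?_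
  have hba : b • a • N ≤ L := (pointwise_smul_le_ideal_smul hb _).trans h
  rcases hN.2 b a L hL hba with hbN | haN' | hmul
  · exact .inl (mem_colon_iff_le.2 hbN)
  · exact absurd haN' haN
  · exact .inr (mem_colon_singleton.2 hmul)

theorem ideal_smul_2absorbing_second
    {R M : Type*} [CommRing R] [AddCommGroup M] [Module R M]
    (N : Submodule R M) (hN : Is2AbsorbingSecond N) (I : Ideal R) (a : R)
    (L : Submodule R M) (hL : IsCompletelyIrreducible L) (h : I • a • N ≤ L) :
    a • N ≤ L ∨ I • N ≤ L ∨ ∀ x ∈ I, x * a ∈ N.annihilator := by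
  by_cases haN : a • N ≤ L
  · exact .inl haN
  rcases hN.le_colon_or_le_colon_of_ideal_smul_le hL haN h with hI | hI
  · exact .inr (.inl (ideal_smul_le_iff_le_colon.2 hI))
  · exact .inr (.inr fun x hx ↦ mem_colon_singleton.1 (hI hx))
end

section
/- Let N be a 2-absorbing second submodule of M, I and J ideals of R, and L a completely irreducible submodule of M. If I•J•N ⊆ L, then I•N ⊆ L or J•N ⊆ L or I•J ⊆ Ann_R(N). -/
open Pointwise

/-! Both `a • N ≤ L` and `I • N ≤ L` only involve the ideal `K = (L : N)`, so it suffices to show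
that if `ab ∈ K` forces `a ∈ K`, `b ∈ K` or `ab ∈ Ann(N)`, then `IJ ⊆ K` forces `I ⊆ K`, `J ⊆ K` or
`IJ ⊆ Ann(N)`. When `I ⊄ K` and `J ⊄ K`, this holds because a submodule `H ⊄ K` is generated by
`H \ K`: if `x ∈ H ∩ K` and `x₁ ∈ H \ K`, then `x = (x + x₁) - x₁` with `x + x₁, x₁ ∉ K`. -/

namespace Submodule

variable {R M : Type*} [Ring R] [AddCommGroup M] [Module R M]

theorem le_of_forall_mem_of_notMem {H K B : Submodule R M} (hHK : ¬H ≤ K)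
    (h : ∀ x ∈ H, x ∉ K → x ∈ B) : H ≤ B := by
  obtain ⟨x₁, hx₁H, hx₁K⟩ := SetLike.not_le_iff_exists.mp hHK
  intro x hx
  by_cases hxK : x ∈ K
  · have hsum : x + x₁ ∉ K := fun hK ↦ hx₁K (by simpa using K.sub_mem hK hxK)
    simpa using B.sub_mem (h _ (H.add_mem hx hx₁H) hsum) (h x₁ hx₁H hx₁K)
  · exact h x hx hxK

end Submodule

theorem Ideal.le_or_le_or_mul_le_of_mul_le {R : Type*} [CommRing R] {I J K A : Ideal R}
    (hK : ∀ a b, a * b ∈ K → a ∈ K ∨ b ∈ K ∨ a * b ∈ A) (h : I * J ≤ K) :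
    I ≤ K ∨ J ≤ K ∨ I * J ≤ A := by
  by_cases hI : I ≤ K
  · exact .inl hI
  by_cases hJ : J ≤ K
  · exact .inr (.inl hJ)
  refine .inr (.inr (Ideal.mul_le.mpr fun a ha b hb ↦ ?_))
  have outside : ∀ a ∈ I, a ∉ K → ∀ b ∈ J, b ∉ K → a * b ∈ A := fun a ha haK b hb hbK ↦
    ((hK a b (h (Ideal.mul_mem_mul ha hb))).resolve_left haK).resolve_left hbK
  have right_outside : ∀ b ∈ J, b ∉ K → ∀ a ∈ I, a * b ∈ A := fun b hb hbK ↦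
    Submodule.le_of_forall_mem_of_notMem (B := Submodule.comap (LinearMap.mulRight R b) A) hI
      fun a ha haK ↦ outside a ha haK b hb hbK
  exact Submodule.le_of_forall_mem_of_notMem (B := Submodule.comap (LinearMap.mulLeft R a) A) hJ
    (fun b hb hbK ↦ right_outside b hb hbK a ha) hb

theorem Submodule.smul_le_iff_le_colon {R M : Type*} [CommRing R] [AddCommGroup M] [Module R M]
    {I : Ideal R} {N L : Submodule R M} : I • N ≤ L ↔ I ≤ L.colon N := by
  rw [Submodule.smul_le]
  simp only [SetLike.le_def, Submodule.mem_colon, SetLike.mem_coe]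

theorem ideal_ideal_2absorbing_second
    {R M : Type*} [CommRing R] [AddCommGroup M] [Module R M]
    (N : Submodule R M) (hN : Is2AbsorbingSecond N) (I J : Ideal R)
    (L : Submodule R M) (hL : IsCompletelyIrreducible L) (h : I • J • N ≤ L) :
    I • N ≤ L ∨ J • N ≤ L ∨ I * J ≤ N.annihilator := by
  simp only [Submodule.smul_le_iff_le_colon, ← Submodule.mul_smul] at h ⊢
  refine Ideal.le_or_le_or_mul_le_of_mul_le (fun a b hab ↦ ?_) h
  simp only [Submodule.mem_colon_iff_le] at hab ⊢
  exact hN.2 a b L hL (by rwa [smul_smul])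
end

section
/- If N is a 2-absorbing second submodule of M and L is a completely irreducible submodule of M with N ⊄ L, then the ideal (L :_R N) = {r ∈ R : r•N ⊆ L} is a 2-absorbing ideal of R. -/
open Pointwise

/-- A proper ideal `I` is 2-absorbing if `a*b*c ∈ I` implies `a*b ∈ I` or `a*c ∈ I`
or `b*c ∈ I`. -/
def Is2AbsorbingIdeal {R : Type*} [CommRing R] (I : Ideal R) : Prop :=
  I ≠ ⊤ ∧ ∀ a b c : R, a * b * c ∈ I → a * b ∈ I ∨ a * c ∈ I ∨ b * c ∈ I

/-!
Given `a * b * c ∈ (L :_R N)`, pass to the submodule `(L :_M c) = {x | c • x ∈ L}`, which contains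
`a • b • N`. If it is all of `M`, then `b * c ∈ (L :_R N)`. Otherwise it is again completely
irreducible, and the 2-absorbing second property of `N` applied to it yields `a * c`, `b * c` or
`a * b` in `(L :_R N)`.

Here `(L :_M c)` is the preimage of `L` under `c • id`. Complete irreducibility passes to proper
preimages under linear maps because it means that some `m ∉ L` lies in every submodule strictly
above `L`: if `m ≡ f x` modulo `L`, then `x` is such a witness for `L.comap f`.
-/

namespace Submodule

theorem mem_colon_comap_smul {R M : Type*} [CommSemiring R] [AddCommMonoid M] [Module R M]
    {L : Submodule R M} {S : Set M} {r c : R} :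
    r ∈ (L.comap (c • LinearMap.id)).colon S ↔ r * c ∈ L.colon S := by
  simp only [mem_colon, mem_comap, LinearMap.smul_apply, LinearMap.id_apply, mul_comm r c, mul_smul]

end Submodule

section CompletelyIrreducible

variable {R M M' : Type*} [CommRing R] [AddCommGroup M] [Module R M] [AddCommGroup M']
  [Module R M']

theorem isCompletelyIrreducible_iff_exists_mem_of_lt {L : Submodule R M} :
    IsCompletelyIrreducible L ↔ L ≠ ⊤ ∧ ∃ m ∉ L, ∀ K, L < K → m ∈ K := by
  constructor
  · rintro ⟨hL, hmeet⟩
    have hlt : L < sInf {K | L < K} :=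
      lt_of_le_of_ne (le_sInf fun _ hK => hK.le) fun h => lt_irrefl L (hmeet _ h)
    obtain ⟨m, hm, hmL⟩ := SetLike.exists_of_lt hlt
    exact ⟨hL, m, hmL, fun K hK => Submodule.mem_sInf.mp hm K hK⟩
  · rintro ⟨hL, m, hmL, hm⟩
    refine ⟨hL, fun S hS => by_contra fun hLS => hmL ?_⟩
    rw [hS, Submodule.mem_sInf]
    exact fun K hK => hm K (lt_of_le_of_ne (hS ▸ sInf_le hK) fun h => hLS (h ▸ hK))

theorem IsCompletelyIrreducible.comap {L : Submodule R M} (hL : IsCompletelyIrreducible L)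
    (f : M' →ₗ[R] M) (hf : L.comap f ≠ ⊤) : IsCompletelyIrreducible (L.comap f) := by
  obtain ⟨-, m, hmL, hm⟩ := isCompletelyIrreducible_iff_exists_mem_of_lt.mp hL
  have decompose : ∀ K : Submodule R M', L.comap f < K → ∃ k ∈ K, m - f k ∈ L := by
    intro K hK
    have hlt : L < L ⊔ K.map f :=
      left_lt_sup.mpr fun h => hK.not_ge (Submodule.map_le_iff_le_comap.mp h)
    obtain ⟨l, hl, _, ⟨k, hk, rfl⟩, hlk⟩ := Submodule.mem_sup.mp (hm _ hlt)
    exact ⟨k, hk, by rwa [← hlk, add_sub_cancel_right]⟩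
  obtain ⟨x, -, hx⟩ := decompose ⊤ (lt_top_iff_ne_top.mpr hf)
  refine isCompletelyIrreducible_iff_exists_mem_of_lt.mpr ⟨hf, x, fun hxL => hmL ?_, fun K hK => ?_⟩
  · simpa using L.add_mem hx hxL
  · obtain ⟨k, hk, hmk⟩ := decompose K hK
    have hxk : x - k ∈ L.comap f := by simpa using L.sub_mem hmk hx
    simpa using K.add_mem (hK.le hxk) hk

end CompletelyIrreducible

theorem colon_2absorbing
    {R M : Type*} [CommRing R] [AddCommGroup M] [Module R M]
    (N : Submodule R M) (hN : Is2AbsorbingSecond N)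
    (L : Submodule R M) (hL : IsCompletelyIrreducible L) (hNL : ¬ N ≤ L) :
    Is2AbsorbingIdeal (L.colon N) := by
  refine ⟨fun h => hNL ((Submodule.colon_eq_top_iff_subset _).mp h), fun a b c habc => ?_⟩
  set Lc := L.comap (c • (LinearMap.id : M →ₗ[R] M))
  have mem_colon_Lc {r : R} : r ∈ Lc.colon N ↔ r * c ∈ L.colon N :=
    Submodule.mem_colon_comap_smul
  by_cases hc : Lc = ⊤
  · refine Or.inr (Or.inr (mem_colon_Lc.mp ?_))
    rw [hc, Submodule.top_colon]
    exact Submodule.mem_top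
  have hab : a • b • N ≤ Lc := by
    rw [smul_smul, ← Submodule.mem_colon_iff_le]
    exact mem_colon_Lc.mpr habc
  rcases hN.2 a b Lc (hL.comap _ hc) hab with ha | hb | hann
  · exact Or.inr (Or.inl (mem_colon_Lc.mp (Submodule.mem_colon_iff_le.mpr ha)))
  · exact Or.inr (Or.inr (mem_colon_Lc.mp (Submodule.mem_colon_iff_le.mpr hb)))
  · rw [← Submodule.bot_colon] at hann
    exact Or.inl (Submodule.colon_mono bot_le subset_rfl hann)
end

section
/- If N is a 2-absorbing second submodule of M and a ∈ R, then aⁿ•N = aⁿ⁺¹•N for all n ≥ 2. -/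
/-!
Applying the 2-absorbing condition to the pair `a, a` shows that every completely irreducible
submodule containing `a²N` also contains `aN`, unless `a²` annihilates `N`. Since every submodule
is an intersection of completely irreducible ones, either `aN = a²N`, and multiplying by powers
of `a` gives `aⁿN = aⁿ⁺¹N`, or `aⁿN = 0` for all `n ≥ 2`.
-/

open Pointwise

namespace Submodule

variable {R M : Type*} [CommRing R] [AddCommGroup M] [Module R M]

theorem isCompletelyIrreducible_of_maximal_notMem {x : M} {L : Submodule R M}
    (hL : Maximal (fun L' : Submodule R M => x ∉ L') L) : IsCompletelyIrreducible L := by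
  refine ⟨fun hL_top => hL.prop (hL_top ▸ mem_top), fun S hS => ?_⟩
  by_contra hLS
  have hx_mem : ∀ T ∈ S, x ∈ T := fun T hT => by
    have hLT : L < T := lt_of_le_of_ne (hS ▸ sInf_le hT) fun h => hLS (h ▸ hT)
    simpa using hL.not_prop_of_gt hLT
  exact hL.prop (hS ▸ mem_sInf.2 hx_mem)

theorem exists_isCompletelyIrreducible_le_notMem {K : Submodule R M} {x : M} (hx : x ∉ K) :
    ∃ L : Submodule R M, IsCompletelyIrreducible L ∧ K ≤ L ∧ x ∉ L := by
  obtain ⟨L, hKL, hL⟩ := zorn_le_nonempty₀ {L : Submodule R M | x ∉ L}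
    (fun c hc hchain T hT => ⟨sSup c, fun hx_sup => by
      obtain ⟨T', hT', hxT'⟩ := (mem_sSup_of_directed ⟨T, hT⟩ hchain.directedOn).1 hx_sup
      exact hc hT' hxT', fun _ => le_sSup⟩) K hx
  exact ⟨L, isCompletelyIrreducible_of_maximal_notMem hL, hKL, hL.prop⟩

theorem le_of_forall_isCompletelyIrreducible {J K : Submodule R M}
    (h : ∀ L : Submodule R M, IsCompletelyIrreducible L → K ≤ L → J ≤ L) : J ≤ K := by
  intro x hxJ
  by_contra hxK
  obtain ⟨L, hL, hKL, hxL⟩ := exists_isCompletelyIrreducible_le_notMem hxK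
  exact hxL (h L hL hKL hxJ)

theorem pointwise_smul_eq_bot_of_mem_annihilator {r : R} {N : Submodule R M}
    (hr : r ∈ N.annihilator) : r • N = ⊥ := by
  rw [eq_bot_iff]
  rintro _ ⟨m, hm, rfl⟩
  exact (mem_bot R).2 (mem_annihilator.1 hr m hm)

end Submodule

namespace Is2AbsorbingSecond

open Submodule

variable {R M : Type*} [CommRing R] [AddCommGroup M] [Module R M] {N : Submodule R M}

theorem smul_eq_sq_smul_or_sq_mem_annihilator (hN : Is2AbsorbingSecond N) (a : R) :
    a • N = (a ^ 2) • N ∨ a ^ 2 ∈ N.annihilator := by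
  by_cases ha : a ^ 2 ∈ N.annihilator
  · exact Or.inr ha
  have hsq : (a ^ 2) • N = a • a • N := by rw [smul_smul, sq]
  refine Or.inl (le_antisymm ?_ (hsq ▸ smul_le_self_of_tower a _))
  refine le_of_forall_isCompletelyIrreducible fun L hL hle => ?_
  rcases hN.2 a a L hL (hsq ▸ hle) with h | h | h
  · exact h
  · exact h
  · exact absurd (sq a ▸ h) ha

end Is2AbsorbingSecond

theorem pow_smul_stabilizes
    {R M : Type*} [CommRing R] [AddCommGroup M] [Module R M]
    (N : Submodule R M) (hN : Is2AbsorbingSecond N) (a : R) :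
    ∀ n : ℕ, 2 ≤ n → (a ^ n) • N = (a ^ (n + 1)) • N := by
  intro n hn
  rcases hN.smul_eq_sq_smul_or_sq_mem_annihilator a with h | h
  · obtain ⟨k, rfl⟩ : ∃ k, n = k + 1 := ⟨n - 1, by omega⟩
    calc (a ^ (k + 1)) • N = (a ^ k) • a • N := by rw [smul_smul, pow_succ]
      _ = (a ^ k) • (a ^ 2) • N := by rw [h]
      _ = (a ^ (k + 1 + 1)) • N := by rw [smul_smul, ← pow_add]
  · have hbot : ∀ m, 2 ≤ m → (a ^ m) • N = ⊥ := fun m hm =>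
      Submodule.pointwise_smul_eq_bot_of_mem_annihilator (N.annihilator.pow_mem_of_pow_mem h hm)
    rw [hbot n hn, hbot (n + 1) (by omega)]
end

section
/- If N is a 2-absorbing second submodule of M with Ann_R(N) a prime ideal of R, then (L :_R N) is a prime ideal of R for every completely irreducible submodule L of M with N ⊄ L. -/
open Pointwise

theorem Ideal.IsPrime.of_le_of_mul_mem {R : Type*} [CommSemiring R] {I J : Ideal R}
    (hI : I.IsPrime) (hIJ : I ≤ J) (hJ : J ≠ ⊤)
    (h : ∀ a b, a * b ∈ J → a ∈ J ∨ b ∈ J ∨ a * b ∈ I) : J.IsPrime := by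
  refine ⟨hJ, fun {a b} hab => ?_⟩
  rcases h a b hab with ha | hb | hab'
  · exact Or.inl ha
  · exact Or.inr hb
  · exact (hI.mem_or_mem hab').imp (@hIJ a) (@hIJ b)

theorem Submodule.annihilator_le_colon {R M : Type*} [CommSemiring R] [AddCommMonoid M]
    [Module R M] (N L : Submodule R M) : N.annihilator ≤ L.colon N :=
  bot_colon (N := N) ▸ colon_mono bot_le subset_rfl

theorem colon_prime_of_ann_prime
    {R M : Type*} [CommRing R] [AddCommGroup M] [Module R M]
    (N : Submodule R M) (hN : Is2AbsorbingSecond N)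
    (hp : N.annihilator.IsPrime) :
    ∀ L : Submodule R M, IsCompletelyIrreducible L → ¬ N ≤ L →
      (L.colon N).IsPrime := by
  intro L hL hNL
  refine hp.of_le_of_mul_mem (N.annihilator_le_colon L)
    (by rwa [Ne, Submodule.colon_eq_top_iff_subset]) fun a b hab => ?_
  rw [Submodule.mem_colon_iff_le, mul_smul] at hab
  simpa only [Submodule.mem_colon_iff_le] using hN.2 a b L hL hab
end

section
/- The union of a nonempty chain of 2-absorbing second submodules of an R-module M is a 2-absorbing second submodule of M. -/
open Pointwise

/-!
Each of the three alternatives `a • N ≤ L`, `b • N ≤ L`, `a * b ∈ Ann(N)` passes to smaller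
submodules, and holds for `sSup C` as soon as it holds for every member of `C`. If each
alternative failed for some member of the chain, a member above all three would fail all three,
although `a • b •` of it lies in `L`.
-/

theorem DirectedOn.forall_or_forall_of_antitone {α : Type*} [Preorder α] {s : Set α}
    (hs : DirectedOn (· ≤ ·) s) {p q : α → Prop} (hp : Antitone p) (hq : Antitone q)
    (h : ∀ x ∈ s, p x ∨ q x) : (∀ x ∈ s, p x) ∨ ∀ x ∈ s, q x := by
  by_contra! ⟨⟨x, hx, hpx⟩, ⟨y, hy, hqy⟩⟩
  obtain ⟨z, hz, hxz, hyz⟩ := hs x hx y hy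
  exact (h z hz).elim (fun hpz => hpx (hp hxz hpz)) fun hqz => hqy (hq hyz hqz)

theorem DirectedOn.forall_or_forall_or_forall_of_antitone {α : Type*} [Preorder α] {s : Set α}
    (hs : DirectedOn (· ≤ ·) s) {p q r : α → Prop} (hp : Antitone p) (hq : Antitone q)
    (hr : Antitone r) (h : ∀ x ∈ s, p x ∨ q x ∨ r x) :
    (∀ x ∈ s, p x) ∨ (∀ x ∈ s, q x) ∨ ∀ x ∈ s, r x :=
  (hs.forall_or_forall_of_antitone hp (hq.sup hr) h).imp_right
    (hs.forall_or_forall_of_antitone hq hr)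

namespace Submodule

section Pointwise

variable {α R M : Type*} [Monoid α] [Semiring R] [AddCommMonoid M] [Module R M]
  [DistribMulAction α M] [SMulCommClass α R M]

theorem antitone_pointwise_smul_le (a : α) (L : Submodule R M) :
    Antitone fun N : Submodule R M => a • N ≤ L :=
  fun _ _ hNP haP => (smul_mono_right a hNP).trans haP

theorem pointwise_smul_sSup_le_iff {a : α} {C : Set (Submodule R M)} {L : Submodule R M} :
    a • sSup C ≤ L ↔ ∀ K ∈ C, a • K ≤ L := by
  simp only [pointwise_smul_def, map_le_iff_le_comap, sSup_le_iff]

end Pointwise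

variable {R M : Type*} [CommSemiring R] [AddCommMonoid M] [Module R M]

theorem antitone_mem_annihilator (r : R) :
    Antitone fun N : Submodule R M => r ∈ N.annihilator :=
  fun _ _ hNP hrP => annihilator_mono hNP hrP

theorem mem_annihilator_sSup_iff {r : R} {C : Set (Submodule R M)} :
    r ∈ (sSup C).annihilator ↔ ∀ K ∈ C, r ∈ K.annihilator := by
  simp only [sSup_eq_iSup, annihilator_iSup, mem_iInf]

end Submodule

theorem chain_union_2absorbing_second
    {R M : Type*} [CommRing R] [AddCommGroup M] [Module R M]
    (C : Set (Submodule R M)) (hne : C.Nonempty) (hchain : IsChain (· ≤ ·) C)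
    (h : ∀ K ∈ C, Is2AbsorbingSecond K) :
    Is2AbsorbingSecond (sSup C) := by
  obtain ⟨K₀, hK₀⟩ := hne
  refine ⟨ne_bot_of_le_ne_bot (h K₀ hK₀).1 (le_sSup hK₀), fun a b L hL hab => ?_⟩
  rw [Submodule.pointwise_smul_sSup_le_iff, Submodule.pointwise_smul_sSup_le_iff,
    Submodule.mem_annihilator_sSup_iff]
  refine hchain.directedOn.forall_or_forall_or_forall_of_antitone
    (Submodule.antitone_pointwise_smul_le a L) (Submodule.antitone_pointwise_smul_le b L)
    (Submodule.antitone_mem_annihilator (a * b)) fun K hK => (h K hK).2 a b L hL ?_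
  exact (smul_mono_right a (smul_mono_right b (le_sSup hK))).trans hab
end

section
/- Let M be a multiplication R-module and N a submodule such that (N :_R M) is a 2-absorbing ideal of R. Then N is a 2-absorbing submodule of M, i.e., whenever a, b ∈ R and m ∈ M with a•b•m ∈ N, then a•m ∈ N or b•m ∈ N or a•b ∈ (N :_R M). -/
/-!
Write `J = (N : M)` and let `R ∙ m = I • M`, as `M` is a multiplication module. From `a • b • m ∈ N`
we get `a * b * I ⊆ J`. If `a * b ∉ J`, the 2-absorbing property covers `I` by the two ideals
`{c | a * c ∈ J}` and `{c | b * c ∈ J}`, and an additive group covered by two subgroups lies in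
one of them. So `a * I ⊆ J` (say), whence `a • m ∈ a • (I • M) ⊆ J • M ⊆ N`.
-/

open Pointwise

/-- An `R`-module `M` is a multiplication module if every submodule equals `I • M`
for some ideal `I`. -/
def IsMultiplicationModule (R M : Type*) [CommRing R] [AddCommGroup M] [Module R M] : Prop :=
  ∀ N : Submodule R M, ∃ I : Ideal R, N = I • (⊤ : Submodule R M)

theorem Is2AbsorbingIdeal.forall_mul_mem_or_forall_mul_mem {R : Type*} [CommRing R]
    {J I : Ideal R} (hJ : Is2AbsorbingIdeal J) {a b : R} (hab : a * b ∉ J)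
    (habI : ∀ c ∈ I, a * b * c ∈ J) :
    (∀ c ∈ I, a * c ∈ J) ∨ (∀ c ∈ I, b * c ∈ J) := by
  have hcover : (I : Set R) ⊆ J.colon {a} ∪ J.colon {b} := fun c hc => by
    simpa only [Set.mem_union, SetLike.mem_coe, Submodule.mem_colon_singleton, smul_eq_mul,
      mul_comm c] using (hJ.2 a b c (habI c hc)).resolve_left hab
  refine (AddSubgroupClass.subset_union.mp hcover).imp (fun h c hc => ?_) (fun h c hc => ?_)
  · simpa only [Submodule.mem_colon_singleton, smul_eq_mul, mul_comm c] using h hc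
  · simpa only [Submodule.mem_colon_singleton, smul_eq_mul, mul_comm c] using h hc

namespace Submodule

variable {R M : Type*} [CommSemiring R] [AddCommMonoid M] [Module R M]
  {N : Submodule R M} {I : Ideal R} {m : M}

theorem mul_mem_colon_top_of_smul_mem (hI : I • ⊤ ≤ R ∙ m) {r c : R} (hr : r • m ∈ N)
    (hc : c ∈ I) : r * c ∈ N.colon ⊤ :=
  mem_colon.mpr fun x _ => by
    obtain ⟨s, hs⟩ := mem_span_singleton.mp (hI (smul_mem_smul hc (mem_top (x := x))))
    rw [mul_smul, ← hs, smul_comm]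
    exact N.smul_mem s hr

theorem smul_mem_of_forall_mul_mem_colon_top (hm : m ∈ I • (⊤ : Submodule R M)) {a : R}
    (ha : ∀ c ∈ I, a * c ∈ N.colon ⊤) : a • m ∈ N :=
  smul_induction_on hm
    (fun c hc x _ => by rw [smul_smul]; exact mem_colon.mp (ha c hc) x trivial)
    (fun x y hx hy => by rw [smul_add]; exact N.add_mem hx hy)

end Submodule

theorem twoAbsorbing_submodule_of_colon_twoAbsorbing
    {R M : Type*} [CommRing R] [AddCommGroup M] [Module R M]
    (hM : IsMultiplicationModule R M) (N : Submodule R M)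
    (h : Is2AbsorbingIdeal (N.colon ⊤)) :
    ∀ (a b : R) (m : M), a • b • m ∈ N →
      a • m ∈ N ∨ b • m ∈ N ∨ a * b ∈ N.colon ⊤ := by
  intro a b m habm
  obtain ⟨I, hI⟩ := hM (R ∙ m)
  have habI : ∀ c ∈ I, a * b * c ∈ N.colon ⊤ := fun c hc =>
    Submodule.mul_mem_colon_top_of_smul_mem hI.ge (by rwa [mul_smul]) hc
  have hm : m ∈ I • (⊤ : Submodule R M) := hI ▸ Submodule.mem_span_singleton_self m
  by_cases hab : a * b ∈ N.colon ⊤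
  · exact .inr (.inr hab)
  rcases h.forall_mul_mem_or_forall_mul_mem hab habI with ha | hb
  · exact .inl (Submodule.smul_mem_of_forall_mul_mem_colon_top hm ha)
  · exact .inr (.inl (Submodule.smul_mem_of_forall_mul_mem_colon_top hm hb))
end
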